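/- There exist constants C₁ > 0, C₂ > 0 and p₀ > 1 such that for all p ≥ p₀ one has ũ_p(s) ≤ C₁·W(s) + C₂ for every s ∈ [-1/μ_p, 1/μ_p], where W(s) = log( 4e^{√2 s} / (1 + e^{√2 s})² ). -/

import Mathlib

/-!
Put `M = u_p(0)`, `B = √(p M^(p-1)) = 1/μ_p` and `q = p (M - u_p)/M`, so that
`ũ_p(s) = -q(μ_p |s|)`. Conservation of the energy `u'^2/2 + u^(p+1)/(p+1)`, the bound
`(u/M)^(p+1) ≤ (1 - q/p)^p ≤ e^(-q)` and `2p/(p+1) ≥ 1` give `q' ≥ B √(1 - e^(-q))` on `(0, 1)`.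
Separating variables with `Φ(q) = q + 2 log (1 + √(1 - e^(-q)))`, a primitive of
`(1 - e^(-q))^(-1/2)` with `Φ(0) = 0` and `Φ(q) ≤ q + 2 log 2`, yields `B t ≤ q(t) + 2 log 2`,
i.e. `ũ_p(s) ≤ 2 log 2 - |s|`. Finally `W(s) = -2 log cosh (s/√2) ≥ -√2 |s|`.
-/

open Real Set Filter Topology

noncomputable section

/-- `u` is the (unique) positive solution of the one-dimensional Lane–Emden problem
`-u'' = u^p` on `(-1,1)` with `u(-1) = u(1) = 0`; it is even, positive on `(-1,1)`,
decreasing on `[0,1]`, and its sup norm is attained at `0`. -/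
def IsLaneEmden (p : ℝ) (u : ℝ → ℝ) : Prop :=
  ContDiff ℝ 2 u ∧
  (∀ t ∈ Ioo (-1 : ℝ) 1, deriv (deriv u) t = -(u t ^ p)) ∧
  u (-1) = 0 ∧ u 1 = 0 ∧
  (∀ t ∈ Ioo (-1 : ℝ) 1, 0 < u t) ∧
  (∀ t : ℝ, u (-t) = u t) ∧
  (∀ ⦃s t : ℝ⦄, s ∈ Icc (0 : ℝ) 1 → t ∈ Icc (0 : ℝ) 1 → s ≤ t → u t ≤ u s) ∧
  (∀ t ∈ Icc (-1 : ℝ) 1, u t ≤ u 0)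

/-- The rescaling parameter `μ_p = (p ‖u_p‖_∞^(p-1))^(-1/2)`. -/
def mup (u : ℝ → ℝ → ℝ) (p : ℝ) : ℝ := (p * u p 0 ^ (p - 1)) ^ (-(1 / 2) : ℝ)

/-- The rescaled function `ũ_p(s) = p (u_p(μ_p s) - u_p(0)) / u_p(0)`. -/
def utilde (u : ℝ → ℝ → ℝ) (p : ℝ) (s : ℝ) : ℝ :=
  p * (u p (mup u p * s) - u p 0) / u p 0

/-- The limit profile `W(s) = log( 4 e^{√2 s} / (1 + e^{√2 s})² )`. -/
def W (s : ℝ) : ℝ :=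
  Real.log (4 * Real.exp (Real.sqrt 2 * s) / (1 + Real.exp (Real.sqrt 2 * s)) ^ 2)

lemma rpow_add_one_le_exp_neg {r p : ℝ} (hr₀ : 0 ≤ r) (hr₁ : r ≤ 1) (hp : 0 ≤ p) :
    r ^ (p + 1) ≤ exp (-(p * (1 - r))) :=
  calc r ^ (p + 1) ≤ r ^ p := rpow_le_rpow_of_exponent_ge' hr₀ hr₁ hp (by linarith)
    _ ≤ exp (r - 1) ^ p := rpow_le_rpow hr₀ (by linarith [add_one_le_exp (r - 1)]) hp
    _ = exp (-(p * (1 - r))) := by rw [← exp_mul]; ring_nf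

def primitiveInvSqrtOneSubExp (q : ℝ) : ℝ := q + 2 * log (1 + √(1 - exp (-q)))

lemma primitiveInvSqrtOneSubExp_zero : primitiveInvSqrtOneSubExp 0 = 0 := by
  simp [primitiveInvSqrtOneSubExp]

lemma primitiveInvSqrtOneSubExp_le (q : ℝ) : primitiveInvSqrtOneSubExp q ≤ q + 2 * log 2 := by
  have hsqrt : √(1 - exp (-q)) ≤ 1 := sqrt_le_one.mpr (by linarith [exp_pos (-q)])
  have := log_le_log (by positivity) (by linarith : 1 + √(1 - exp (-q)) ≤ 2)
  unfold primitiveInvSqrtOneSubExp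
  linarith

lemma continuous_primitiveInvSqrtOneSubExp : Continuous primitiveInvSqrtOneSubExp :=
  continuous_id.add <| continuous_const.mul <| Continuous.log (by fun_prop) fun q ↦ by positivity

lemma hasDerivAt_primitiveInvSqrtOneSubExp {q : ℝ} (hq : 0 < q) :
    HasDerivAt primitiveInvSqrtOneSubExp (√(1 - exp (-q)))⁻¹ q := by
  have hy : 0 < 1 - exp (-q) := by linarith [exp_lt_one_iff.mpr (neg_lt_zero.mpr hq)]
  have hsqrt := (((hasDerivAt_neg q).exp).const_sub 1).sqrt hy.ne'
  have hlog := ((hsqrt.const_add 1).log (by positivity)).const_mul 2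
  refine ((hasDerivAt_id' q).add hlog).congr_deriv ?_
  have hy2 := sq_sqrt hy.le
  have hpos := sqrt_pos.mpr hy
  field_simp
  linear_combination hy2

lemma mul_le_primitiveInvSqrtOneSubExp_sub {q q' : ℝ → ℝ} {a B t : ℝ}
    (hcont : ContinuousOn q (Icc 0 a)) (hderiv : ∀ x ∈ Ioo 0 a, HasDerivAt q (q' x) x)
    (hpos : ∀ x ∈ Ioo 0 a, 0 < q x) (hineq : ∀ x ∈ Ioo 0 a, B * √(1 - exp (-q x)) ≤ q' x)
    (ht : t ∈ Icc 0 a) :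
    B * t ≤ primitiveInvSqrtOneSubExp (q t) - primitiveInvSqrtOneSubExp (q 0) := by
  have hmono : MonotoneOn (fun x ↦ primitiveInvSqrtOneSubExp (q x) - B * x) (Icc 0 a) := by
    refine monotoneOn_of_hasDerivWithinAt_nonneg (convex_Icc 0 a)
      ((continuous_primitiveInvSqrtOneSubExp.comp_continuousOn hcont).sub (by fun_prop))
      (f' := fun x ↦ (√(1 - exp (-q x)))⁻¹ * q' x - B * 1) (fun x hx ↦ ?_) (fun x hx ↦ ?_)
    all_goals rw [interior_Icc] at hx
    · exact (((hasDerivAt_primitiveInvSqrtOneSubExp (hpos x hx)).comp x (hderiv x hx)).sub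
        ((hasDerivAt_id x).const_mul B)).hasDerivWithinAt
    · have hy : 0 < √(1 - exp (-q x)) :=
        sqrt_pos.mpr (by linarith [exp_lt_one_iff.mpr (neg_lt_zero.mpr (hpos x hx))])
      rw [mul_one, sub_nonneg, inv_mul_eq_div, le_div_iff₀ hy]
      linarith [hineq x hx]
  have h := hmono ⟨le_rfl, ht.1.trans ht.2⟩ ht ht.1
  simp only [mul_zero, sub_zero] at h
  linarith

lemma deriv_sq_div_two_add_rpow_eq {p : ℝ} {f : ℝ → ℝ} (hp : 0 ≤ p)
    (hf₁ : Differentiable ℝ f) (hf₂ : Differentiable ℝ (deriv f))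
    (hode : ∀ t ∈ Ioo (-1 : ℝ) 1, deriv (deriv f) t = -(f t ^ p)) {s t : ℝ}
    (hs : s ∈ Ioo (-1 : ℝ) 1) (ht : t ∈ Ioo (-1 : ℝ) 1) :
    deriv f s ^ 2 / 2 + f s ^ (p + 1) / (p + 1) =
      deriv f t ^ 2 / 2 + f t ^ (p + 1) / (p + 1) := by
  have hE : ∀ τ ∈ Ioo (-1 : ℝ) 1,
      HasDerivAt (fun σ ↦ deriv f σ ^ 2 / 2 + f σ ^ (p + 1) / (p + 1)) 0 τ := by
    intro τ hτ
    have hkin := ((hf₂ τ).hasDerivAt.pow 2).div_const 2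
    have hpot := ((hf₁ τ).hasDerivAt.rpow_const (p := p + 1) (Or.inr (by linarith))).div_const
      (p + 1)
    refine (hkin.add hpot).congr_deriv ?_
    rw [hode τ hτ, add_sub_cancel_right]
    field_simp
    ring
  exact isOpen_Ioo.is_const_of_deriv_eq_zero isPreconnected_Ioo
    (fun τ hτ ↦ (hE τ hτ).differentiableAt.differentiableWithinAt) (fun τ hτ ↦ (hE τ hτ).deriv)
    hs ht

namespace IsLaneEmden

variable {p : ℝ} {u : ℝ → ℝ}

lemma differentiable (h : IsLaneEmden p u) : Differentiable ℝ u :=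
  h.1.differentiable (by norm_num)

lemma differentiable_deriv (h : IsLaneEmden p u) : Differentiable ℝ (deriv u) :=
  ((contDiff_succ_iff_deriv (n := 1)).mp h.1).2.2.differentiable one_ne_zero

lemma apply_pos (h : IsLaneEmden p u) {t : ℝ} (ht : t ∈ Ioo (-1 : ℝ) 1) : 0 < u t :=
  h.2.2.2.2.1 t ht

lemma apply_abs (h : IsLaneEmden p u) (t : ℝ) : u |t| = u t := by
  rcases abs_cases t with ⟨ht, -⟩ | ⟨ht, -⟩ <;> simp only [ht, h.2.2.2.2.2.1]

lemma deriv_zero (h : IsLaneEmden p u) : deriv u 0 = 0 :=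
  IsLocalMax.deriv_eq_zero <|
    Filter.mem_of_superset (Icc_mem_nhds (by norm_num) (by norm_num)) h.2.2.2.2.2.2.2

lemma deriv_neg (h : IsLaneEmden p u) {t : ℝ} (ht : t ∈ Ioo (0 : ℝ) 1) : deriv u t < 0 := by
  have hanti : StrictAntiOn (deriv u) (Icc 0 1) := by
    refine strictAntiOn_of_deriv_neg (convex_Icc 0 1)
      h.differentiable_deriv.continuous.continuousOn fun x hx ↦ ?_
    rw [interior_Icc] at hx
    have hx' : x ∈ Ioo (-1 : ℝ) 1 := ⟨by linarith [hx.1], hx.2⟩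
    rw [h.2.1 x hx', neg_lt_zero]
    exact rpow_pos_of_pos (h.apply_pos hx') p
  simpa [h.deriv_zero] using hanti (left_mem_Icc.mpr zero_le_one) (Ioo_subset_Icc_self ht) ht.1

lemma apply_lt_apply_zero (h : IsLaneEmden p u) {t : ℝ} (ht : t ∈ Ioc (0 : ℝ) 1) :
    u t < u 0 := by
  have hanti : StrictAntiOn u (Icc 0 1) := by
    refine strictAntiOn_of_deriv_neg (convex_Icc 0 1) h.differentiable.continuous.continuousOn
      fun x hx ↦ ?_
    rw [interior_Icc] at hx
    exact h.deriv_neg hx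
  exact hanti (left_mem_Icc.mpr zero_le_one) (Ioc_subset_Icc_self ht) ht.1

lemma deriv_sq (hp : 0 ≤ p) (h : IsLaneEmden p u) {t : ℝ} (ht : t ∈ Ico (0 : ℝ) 1) :
    deriv u t ^ 2 = 2 / (p + 1) * (u 0 ^ (p + 1) - u t ^ (p + 1)) := by
  have hE := deriv_sq_div_two_add_rpow_eq hp h.differentiable h.differentiable_deriv h.2.1
    ⟨by linarith [ht.1], ht.2⟩ (show (0 : ℝ) ∈ Ioo (-1) 1 by norm_num)
  rw [h.deriv_zero] at hE
  field_simp at hE ⊢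
  linarith

lemma sqrt_mul_sqrt_one_sub_exp_le (hp : 1 ≤ p) (h : IsLaneEmden p u) {t : ℝ}
    (ht : t ∈ Ioo (0 : ℝ) 1) :
    √(p * u 0 ^ (p - 1)) * √(1 - exp (-(p * (u 0 - u t) / u 0))) ≤ -(p * deriv u t) / u 0 := by
  set M := u 0
  set v := u t
  set d := deriv u t
  have hM : 0 < M := h.apply_pos (by norm_num)
  have hv : 0 < v := h.apply_pos ⟨by linarith [ht.1], ht.2⟩
  have hvM : v < M := h.apply_lt_apply_zero ⟨ht.1, ht.2.le⟩
  have hd : d < 0 := h.deriv_neg ht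
  have hexp : (v / M) ^ (p + 1) ≤ exp (-(p * (M - v) / M)) := by
    convert rpow_add_one_le_exp_neg (p := p) (div_nonneg hv.le hM.le)
      ((div_le_one hM).mpr hvM.le) (by linarith) using 3
    field_simp
  have hMpow : M ^ (p + 1) = M ^ (p - 1) * M ^ 2 := by
    rw [← rpow_natCast, ← rpow_add hM]
    congr 1
    ring
  have hvpow : v ^ (p + 1) = (v / M) ^ (p + 1) * M ^ (p + 1) := by
    rw [← mul_rpow (by positivity) hM.le, div_mul_cancel₀ v hM.ne']
  have hK : 0 ≤ p * (M ^ (p - 1) * M ^ 2) := by positivity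
  have hA : 0 ≤ M ^ (p + 1) - v ^ (p + 1) :=
    sub_nonneg.mpr (rpow_le_rpow hv.le hvM.le (by linarith))
  have hcoef : 1 ≤ 2 * p / (p + 1) := by rw [le_div_iff₀ (by linarith)]; linarith
  rw [← sqrt_mul (by positivity), sqrt_le_iff]
  refine ⟨div_nonneg (by nlinarith) hM.le, ?_⟩
  rw [div_pow, le_div_iff₀ (by positivity)]
  calc p * M ^ (p - 1) * (1 - exp (-(p * (M - v) / M))) * M ^ 2
      ≤ p * (M ^ (p + 1) - v ^ (p + 1)) := by
        rw [hvpow, hMpow]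
        nlinarith [mul_le_mul_of_nonneg_left hexp hK]
    _ ≤ 2 * p / (p + 1) * (p * (M ^ (p + 1) - v ^ (p + 1))) :=
        le_mul_of_one_le_left (mul_nonneg (by linarith) hA) hcoef
    _ = (-(p * d)) ^ 2 := by
        rw [neg_sq, mul_pow, h.deriv_sq (by linarith) ⟨ht.1.le, ht.2⟩]
        ring

lemma mul_sqrt_le_add_two_mul_log_two (hp : 1 ≤ p) (h : IsLaneEmden p u) {t : ℝ}
    (ht : t ∈ Icc (0 : ℝ) 1) :
    t * √(p * u 0 ^ (p - 1)) ≤ p * (u 0 - u t) / u 0 + 2 * log 2 := by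
  have hM : 0 < u 0 := h.apply_pos (by norm_num)
  have hcont := h.differentiable.continuous
  have hgap := mul_le_primitiveInvSqrtOneSubExp_sub (q := fun τ ↦ p * (u 0 - u τ) / u 0)
    (q' := fun τ ↦ -(p * deriv u τ) / u 0) (by fun_prop)
    (fun x _ ↦ (((hasDerivAt_const x (u 0)).sub (h.differentiable x).hasDerivAt).const_mul p
      |>.div_const (u 0)).congr_deriv (by ring))
    (fun x hx ↦ div_pos (mul_pos (by linarith) (sub_pos.mpr (h.apply_lt_apply_zero
      ⟨hx.1, hx.2.le⟩))) hM)
    (fun x hx ↦ h.sqrt_mul_sqrt_one_sub_exp_le hp hx) ht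
  simp only [sub_self, mul_zero, zero_div, primitiveInvSqrtOneSubExp_zero, sub_zero] at hgap
  linarith [primitiveInvSqrtOneSubExp_le (p * (u 0 - u t) / u 0)]

end IsLaneEmden

lemma neg_abs_le_log_four_mul_exp_div_one_add_exp_sq (x : ℝ) :
    -|x| ≤ log (4 * exp x / (1 + exp x) ^ 2) := by
  have hsum : 1 + exp x ≤ 2 * exp ((x + |x|) / 2) := by
    have h₁ : 1 ≤ exp ((x + |x|) / 2) := one_le_exp (by linarith [neg_abs_le x])
    have h₂ : exp x ≤ exp ((x + |x|) / 2) := exp_le_exp.mpr (by linarith [le_abs_self x])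
    linarith
  have hlog : log (1 + exp x) ≤ log 2 + (x + |x|) / 2 := by
    calc log (1 + exp x) ≤ log (2 * exp ((x + |x|) / 2)) := log_le_log (by positivity) hsum
      _ = log 2 + (x + |x|) / 2 := by rw [log_mul two_ne_zero (exp_ne_zero _), log_exp]
  rw [log_div (by positivity) (by positivity), log_mul (by norm_num) (exp_ne_zero x), log_exp,
    log_pow, show (4 : ℝ) = 2 ^ 2 by norm_num, log_pow]
  push_cast
  linarith

lemma neg_sqrt_two_mul_abs_le_W (s : ℝ) : -(√2 * |s|) ≤ W s := by
  have h := neg_abs_le_log_four_mul_exp_div_one_add_exp_sq (√2 * s)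
  rwa [abs_mul, abs_of_nonneg (sqrt_nonneg 2)] at h

/-- Decay estimate: `ũ_p ≤ C₁ W + C₂` on `[-1/μ_p, 1/μ_p]` for `p` large. -/
theorem rescaled_decay_estimate
    (u : ℝ → ℝ → ℝ) (hu : ∀ p : ℝ, 1 < p → IsLaneEmden p (u p)) :
    ∃ C₁ > (0 : ℝ), ∃ C₂ > (0 : ℝ), ∃ p₀ > (1 : ℝ), ∀ p ≥ p₀,
      ∀ s : ℝ, |s| ≤ 1 / mup u p → utilde u p s ≤ C₁ * W s + C₂ := by
  refine ⟨√2 / 2, by positivity, 2 * log 2, by positivity, 2, by norm_num, fun p hp s hs ↦ ?_⟩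
  have h := hu p (by linarith)
  have hp₀ : 0 < p := by linarith
  have hM : 0 < u p 0 := h.apply_pos (by norm_num)
  have hμ : mup u p = (√(p * u p 0 ^ (p - 1)))⁻¹ := by
    rw [mup, rpow_neg (by positivity), sqrt_eq_rpow]
  have hμ₀ : 0 < mup u p := by rw [hμ]; positivity
  have ht : mup u p * |s| ∈ Icc (0 : ℝ) 1 :=
    ⟨by positivity, by rwa [← le_div_iff₀' hμ₀]⟩
  have hgap := h.mul_sqrt_le_add_two_mul_log_two (by linarith) ht
  have hscale : mup u p * |s| * √(p * u p 0 ^ (p - 1)) = |s| := by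
    rw [hμ]
    field_simp
  have hsym : u p (mup u p * s) = u p (mup u p * |s|) := by
    rw [← h.apply_abs, abs_mul, abs_of_pos hμ₀]
  have hW := mul_le_mul_of_nonneg_left (neg_sqrt_two_mul_abs_le_W s)
    (by positivity : (0 : ℝ) ≤ √2 / 2)
  have hsqrt2 : √2 / 2 * -(√2 * |s|) = -|s| := by
    linear_combination (-|s| / 2) * mul_self_sqrt (zero_le_two : (0 : ℝ) ≤ 2)
  have hneg : utilde u p s = -(p * (u p 0 - u p (mup u p * |s|)) / u p 0) := by
    rw [utilde, hsym]
    ring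
  linarith
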